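/- arXiv:1812.07075 — 2 statements merged into one kernel-verified Lean document; each statement's English description precedes it below -/
import Mathlib

section
/- Let G be a finite simple graph and let e = uv be an edge of G. Let H be the graph obtained from G by deleting e, adding two new vertices u' and v', and adding the edges uu', u'v', v'v (a double subdivision of e). Then the minimum size of a vertex cover of H equals the minimum size of a vertex cover of G plus 1. -/
/-- A vertex cover: a set of vertices touching every edge. -/
def IsVCover {W : Type*} (G : SimpleGraph W) (S : Finset W) : Prop :=
  ∀ e ∈ G.edgeSet, ∃ w ∈ S, w ∈ e

/-- The graph obtained from `G` by a double subdivision of the edge `uv`: the edge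
`uv` is deleted, two new vertices `u' = inr 0` and `v' = inr 1` are added, together
with the edges `u—u'`, `u'—v'`, `v'—v`. -/
def doubleSubdiv {V : Type*} [DecidableEq V] (G : SimpleGraph V) (u v : V) :
    SimpleGraph (V ⊕ Fin 2) :=
  SimpleGraph.fromRel (fun x y =>
    match x, y with
    | Sum.inl a, Sum.inl b => G.Adj a b ∧ s(a, b) ≠ s(u, v)
    | Sum.inl a, Sum.inr i => (a = u ∧ i = 0) ∨ (a = v ∧ i = 1)
    | Sum.inr i, Sum.inr j => i = 0 ∧ j = 1
    | Sum.inr _, Sum.inl _ => False)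

/-!
A cover of the subdivided graph must contain `u'` or `v'` to cover the middle edge `u'v'`.
If it contains both, trading them for `u` gives a cover of `G`; if it contains only one, the
path edge at the missing one forces `u` or `v` into the cover, so its old vertices already
cover `uv`. Either way one vertex is saved. Conversely, a cover of `G` contains `u` or `v`;
adding the new vertex at the far end of the path from it covers the three path edges.
-/

open Finset

theorem Nat.sInf_eq_sInf_add_one {A B : Set ℕ} (hA : A.Nonempty)
    (hAB : ∀ a ∈ A, a + 1 ∈ B) (hBA : ∀ b ∈ B, ∃ a ∈ A, a + 1 ≤ b) :
    sInf B = sInf A + 1 := by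
  have hmem : sInf A + 1 ∈ B := hAB _ (Nat.sInf_mem hA)
  refine le_antisymm (Nat.sInf_le hmem) (le_csInf ⟨_, hmem⟩ fun b hb => ?_)
  obtain ⟨a, ha, hab⟩ := hBA b hb
  exact (Nat.add_le_add_right (Nat.sInf_le ha) 1).trans hab

section IsVCover

variable {W : Type*} {G G' : SimpleGraph W} {S T : Finset W}

theorem isVCover_iff : IsVCover G S ↔ ∀ ⦃a b⦄, G.Adj a b → a ∈ S ∨ b ∈ S := by
  refine ⟨fun h a b hab => ?_, fun h e he => ?_⟩
  · obtain ⟨w, hw, hwe⟩ := h s(a, b) hab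
    rcases Sym2.mem_iff.1 hwe with rfl | rfl
    exacts [.inl hw, .inr hw]
  · induction e using Sym2.ind with
    | _ a b => exact (h he).elim (⟨a, ·, Sym2.mem_mk_left a b⟩) (⟨b, ·, Sym2.mem_mk_right a b⟩)

theorem isVCover_univ [Fintype W] (G : SimpleGraph W) : IsVCover G univ :=
  isVCover_iff.2 fun a _ _ => .inl (mem_univ a)

theorem IsVCover.mono (h : IsVCover G S) (hST : S ⊆ T) : IsVCover G T :=
  isVCover_iff.2 fun _ _ hab => (isVCover_iff.1 h hab).imp (@hST _) (@hST _)

theorem IsVCover.of_le (h : IsVCover G S) (hle : G' ≤ G) : IsVCover G' S :=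
  isVCover_iff.2 fun _ _ hab => isVCover_iff.1 h (hle hab)

theorem IsVCover.of_deleteEdges_singleton {u v : W}
    (h : IsVCover (G.deleteEdges {s(u, v)}) S) (huv : u ∈ S ∨ v ∈ S) : IsVCover G S := by
  refine isVCover_iff.2 fun a b hab => ?_
  by_cases he : s(a, b) = s(u, v)
  · rcases Sym2.eq_iff.1 he with ⟨rfl, rfl⟩ | ⟨rfl, rfl⟩
    exacts [huv, huv.symm]
  · exact isVCover_iff.1 h (SimpleGraph.deleteEdges_adj.2 ⟨hab, he⟩)

end IsVCover

section doubleSubdiv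

variable {V : Type*} [DecidableEq V] {G : SimpleGraph V} {u v : V}

@[simp]
theorem doubleSubdiv_adj_inl_inl {a b : V} :
    (doubleSubdiv G u v).Adj (.inl a) (.inl b) ↔ (G.deleteEdges {s(u, v)}).Adj a b := by
  simp only [doubleSubdiv, SimpleGraph.fromRel_adj, SimpleGraph.deleteEdges_adj,
    Set.mem_singleton_iff, Sym2.eq_swap (a := b)]
  constructor
  · rintro ⟨-, h | h⟩
    exacts [h, ⟨h.1.symm, h.2⟩]
  · exact fun h => ⟨fun hab => h.1.ne (Sum.inl_injective hab), .inl h⟩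

@[simp]
theorem doubleSubdiv_adj_inl_inr {a : V} {i : Fin 2} :
    (doubleSubdiv G u v).Adj (.inl a) (.inr i) ↔ a = u ∧ i = 0 ∨ a = v ∧ i = 1 := by
  simp [doubleSubdiv]

@[simp]
theorem doubleSubdiv_adj_inr_inr {i j : Fin 2} :
    (doubleSubdiv G u v).Adj (.inr i) (.inr j) ↔ i ≠ j := by
  simp only [doubleSubdiv, SimpleGraph.fromRel_adj]
  fin_cases i <;> fin_cases j <;> simp

theorem isVCover_doubleSubdiv_disjSum_iff {S : Finset V} {R : Finset (Fin 2)} :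
    IsVCover (doubleSubdiv G u v) (S.disjSum R) ↔
      IsVCover (G.deleteEdges {s(u, v)}) S ∧
        (u ∈ S ∨ 0 ∈ R) ∧ (0 ∈ R ∨ 1 ∈ R) ∧ (1 ∈ R ∨ v ∈ S) := by
  simp only [isVCover_iff, Sum.forall, doubleSubdiv_adj_inl_inl, doubleSubdiv_adj_inl_inr,
    doubleSubdiv_adj_inr_inr, SimpleGraph.adj_comm _ (Sum.inr _) (Sum.inl _), inl_mem_disjSum,
    inr_mem_disjSum, Fin.forall_fin_two]
  grind

theorem IsVCover.disjSum_doubleSubdiv {S : Finset V} (hS : IsVCover G S) (huv : G.Adj u v) :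
    IsVCover (doubleSubdiv G u v) (S.disjSum {if u ∈ S then 1 else 0}) := by
  refine isVCover_doubleSubdiv_disjSum_iff.2 ⟨hS.of_le (G.deleteEdges_le _), ?_⟩
  have := isVCover_iff.1 hS huv
  split_ifs <;> simp_all

theorem IsVCover.exists_card_add_one_le_of_doubleSubdiv {T : Finset (V ⊕ Fin 2)}
    (hT : IsVCover (doubleSubdiv G u v) T) : ∃ S, IsVCover G S ∧ #S + 1 ≤ #T := by
  rw [← toLeft_disjSum_toRight (u := T)] at hT
  obtain ⟨hS, hu, hmid, hv⟩ := isVCover_doubleSubdiv_disjSum_iff.1 hT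
  have hcard := card_toLeft_add_card_toRight (u := T)
  by_cases hboth : 0 ∈ T.toRight ∧ 1 ∈ T.toRight
  · refine ⟨insert u T.toLeft, ?_, ?_⟩
    · exact (hS.mono (subset_insert _ _)).of_deleteEdges_singleton (.inl (mem_insert_self ..))
    · have := card_insert_le u T.toLeft
      have := one_lt_card.2 ⟨0, hboth.1, 1, hboth.2, by decide⟩
      omega
  · refine ⟨T.toLeft, hS.of_deleteEdges_singleton (by tauto), ?_⟩
    have := card_pos.2 (hmid.elim (⟨_, ·⟩) (⟨_, ·⟩))
    omega

end doubleSubdiv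

/-- the minimum size of a vertex cover of the double subdivision of an
edge `uv` of `G` equals the minimum size of a vertex cover of `G` plus 1. -/
theorem doubleSubdiv_minVC {V : Type*} [Fintype V] [DecidableEq V]
    (G : SimpleGraph V) (u v : V) (huv : G.Adj u v) :
    sInf {m : ℕ | ∃ S : Finset (V ⊕ Fin 2),
        IsVCover (doubleSubdiv G u v) S ∧ S.card = m}
      = sInf {m : ℕ | ∃ S : Finset V, IsVCover G S ∧ S.card = m} + 1 := by
  refine Nat.sInf_eq_sInf_add_one ⟨_, univ, isVCover_univ G, rfl⟩ ?_ ?_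
  · rintro _ ⟨S, hS, rfl⟩
    exact ⟨_, hS.disjSum_doubleSubdiv huv, by rw [card_disjSum, card_singleton]⟩
  · rintro _ ⟨T, hT, rfl⟩
    obtain ⟨S, hS, hcard⟩ := hT.exists_card_add_one_le_of_doubleSubdiv
    exact ⟨_, ⟨S, hS, rfl⟩, hcard⟩
end

section
/- Let H be a finite simple graph and let v be a vertex of H of degree exactly 4 with neighbors w₁, w₂, w₃, w₄. Let G be the graph obtained from H by deleting v, adding three new vertices v_a, v_b, v_c with edges v_a v_b and v_b v_c, and adding the edges (v_a, w₁), (v_a, w₂), (v_c, w₃), (v_c, w₄). Then the minimum size of a vertex cover of G equals the minimum size of a vertex cover of H plus 1. -/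
/-- The graph obtained from `H` by splitting the degree-4 vertex `v` with neighbors
`w₁, w₂, w₃, w₄`: the vertex `v` is deleted (the remaining vertices are the subtype
`{x // x ≠ v}`), three new vertices `v_a = inr 0`, `v_b = inr 1`, `v_c = inr 2` are
added with the path edges `v_a—v_b`, `v_b—v_c`, and the edges
`(v_a, w₁), (v_a, w₂), (v_c, w₃), (v_c, w₄)`. -/
def vertexSplit {V : Type*} [DecidableEq V] (H : SimpleGraph V)
    (v w₁ w₂ w₃ w₄ : V) :
    SimpleGraph ({x : V // x ≠ v} ⊕ Fin 3) :=
  SimpleGraph.fromRel (fun x y =>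
    match x, y with
    | Sum.inl a, Sum.inl b => H.Adj a.1 b.1
    | Sum.inl a, Sum.inr i =>
        (i = 0 ∧ (a.1 = w₁ ∨ a.1 = w₂)) ∨ (i = 2 ∧ (a.1 = w₃ ∨ a.1 = w₄))
    | Sum.inr i, Sum.inr j => (i = 0 ∧ j = 1) ∨ (i = 1 ∧ j = 2)
    | Sum.inr _, Sum.inl _ => False)

/-! If `S` covers `H`, then `S - v + {v_a, v_c}` (when `v ∈ S`) or `S + v_b` (when `v ∉ S`, so
that every `wᵢ` lies in `S`) covers `G`. Conversely, a cover `T` of `G` meets the path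
`v_a v_b v_c`. If it contains two of the path vertices, collapsing the path back to `v` saves one
vertex; if it contains only `v_b`, it must contain every `wᵢ`, and dropping `v_b` leaves a cover
of `H`. -/

open Finset

noncomputable def vertexCoverNumber {W : Type*} (G : SimpleGraph W) : ℕ :=
  sInf {m : ℕ | ∃ S : Finset W, IsVCover G S ∧ S.card = m}

lemma isVCover_iff_s15 {W : Type*} {G : SimpleGraph W} {S : Finset W} :
    IsVCover G S ↔ ∀ x y, G.Adj x y → x ∈ S ∨ y ∈ S := by
  refine ⟨fun h x y hxy ↦ ?_, fun h e he ↦ ?_⟩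
  · obtain ⟨w, hw, hmem⟩ := h s(x, y) hxy
    rcases Sym2.mem_iff.1 hmem with rfl | rfl <;> simp [hw]
  · induction e using Sym2.ind with
    | _ x y =>
      rcases h x y he with hx | hy
      exacts [⟨x, hx, Sym2.mem_mk_left x y⟩, ⟨y, hy, Sym2.mem_mk_right x y⟩]

lemma isVCover_sum_iff {α β : Type*} {G : SimpleGraph (α ⊕ β)} {T : Finset (α ⊕ β)} :
    IsVCover G T ↔ (∀ a b, G.Adj (.inl a) (.inl b) → .inl a ∈ T ∨ .inl b ∈ T) ∧
      (∀ a i, G.Adj (.inl a) (.inr i) → .inl a ∈ T ∨ .inr i ∈ T) ∧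
      (∀ i j, G.Adj (.inr i) (.inr j) → .inr i ∈ T ∨ .inr j ∈ T) := by
  rw [isVCover_iff_s15]
  refine ⟨fun h ↦ ⟨fun _ _ ↦ h _ _, fun _ _ ↦ h _ _, fun _ _ ↦ h _ _⟩, ?_⟩
  rintro ⟨hll, hlr, hrr⟩ (a | i) (b | j) hadj
  · exact hll a b hadj
  · exact hlr a j hadj
  · exact (hlr b i hadj.symm).symm
  · exact hrr i j hadj

lemma vertexCoverNumber_le {W : Type*} {G : SimpleGraph W} {S : Finset W} (hS : IsVCover G S) :
    vertexCoverNumber G ≤ S.card :=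
  Nat.sInf_le ⟨S, hS, rfl⟩

lemma exists_isVCover_card_eq_vertexCoverNumber {W : Type*} [Fintype W] (G : SimpleGraph W) :
    ∃ S : Finset W, IsVCover G S ∧ S.card = vertexCoverNumber G :=
  Nat.sInf_mem (s := {m | ∃ S : Finset W, IsVCover G S ∧ S.card = m})
    ⟨_, univ, isVCover_iff_s15.2 fun x _ _ ↦ .inl (mem_univ x), rfl⟩

lemma mem_map_toLeft_subtype {V β : Type*} {p : V → Prop} {T : Finset ({x // p x} ⊕ β)} {x : V} :
    x ∈ T.toLeft.map (.subtype p) ↔ ∃ hx : p x, .inl ⟨x, hx⟩ ∈ T := by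
  simp

section vertexSplit

variable {V : Type*} [DecidableEq V] {H : SimpleGraph V} {v w₁ w₂ w₃ w₄ : V}

@[simp]
lemma vertexSplit_adj_inl_inl {a b : {x // x ≠ v}} :
    (vertexSplit H v w₁ w₂ w₃ w₄).Adj (.inl a) (.inl b) ↔ H.Adj a b := by
  simp only [vertexSplit, SimpleGraph.fromRel_adj, H.adj_comm b, or_self, ne_eq, Sum.inl.injEq,
    Subtype.ext_iff]
  exact and_iff_right_of_imp H.ne_of_adj

@[simp]
lemma vertexSplit_adj_inl_inr {a : {x // x ≠ v}} {i : Fin 3} :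
    (vertexSplit H v w₁ w₂ w₃ w₄).Adj (.inl a) (.inr i) ↔
      (i = 0 ∧ (a.1 = w₁ ∨ a.1 = w₂)) ∨ (i = 2 ∧ (a.1 = w₃ ∨ a.1 = w₄)) := by
  simp [vertexSplit]

@[simp]
lemma vertexSplit_adj_inr_inr {i j : Fin 3} :
    (vertexSplit H v w₁ w₂ w₃ w₄).Adj (.inr i) (.inr j) ↔
      (i = 0 ∧ j = 1) ∨ (i = 1 ∧ j = 0) ∨ (i = 1 ∧ j = 2) ∨ (i = 2 ∧ j = 1) := by
  fin_cases i <;> fin_cases j <;> simp [vertexSplit]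

lemma IsVCover.exists_vertexSplit_card_le (hnbrs : {w₁, w₂, w₃, w₄} ⊆ H.neighborSet v)
    {S : Finset V} (hS : IsVCover H S) :
    ∃ T, IsVCover (vertexSplit H v w₁ w₂ w₃ w₄) T ∧ T.card ≤ S.card + 1 := by
  refine ⟨(S.subtype (· ≠ v)).disjSum (if v ∈ S then {0, 2} else {1}), ?_, ?_⟩
  · rw [isVCover_iff_s15] at hS
    refine isVCover_sum_iff.2 ⟨fun a b hab ↦ ?_, fun a i hai ↦ ?_, fun i j hij ↦ ?_⟩
    · simpa using hS _ _ (vertexSplit_adj_inl_inl.1 hab)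
    · rw [vertexSplit_adj_inl_inr] at hai
      by_cases hv : v ∈ S
      · right
        rcases hai with ⟨rfl, -⟩ | ⟨rfl, -⟩ <;> simp [hv]
      · have hva : H.Adj v a := hnbrs (by rcases hai with ⟨-, h | h⟩ | ⟨-, h | h⟩ <;> simp [h])
        left
        simpa [hv] using hS _ _ hva
    · rw [vertexSplit_adj_inr_inr] at hij
      rcases hij with ⟨rfl, rfl⟩ | ⟨rfl, rfl⟩ | ⟨rfl, rfl⟩ | ⟨rfl, rfl⟩ <;> split_ifs <;> simp
  · rw [card_disjSum, card_subtype, filter_ne']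
    split_ifs with hv
    · have := card_erase_add_one hv
      simp only [card_pair (by decide : (0 : Fin 3) ≠ 2)]
      omega
    · simp [erase_eq_of_notMem hv]

variable {T : Finset ({x // x ≠ v} ⊕ Fin 3)}

lemma IsVCover.mem_or_mem_of_vertexSplit (hT : IsVCover (vertexSplit H v w₁ w₂ w₃ w₄) T)
    {x y : V} (hxy : H.Adj x y) (hx : x ≠ v) (hy : y ≠ v) :
    x ∈ T.toLeft.map (.subtype _) ∨ y ∈ T.toLeft.map (.subtype _) := by
  simpa [hx, hy] using
    isVCover_iff_s15.1 hT (.inl ⟨x, hx⟩) (.inl ⟨y, hy⟩) (vertexSplit_adj_inl_inl.2 hxy)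

lemma IsVCover.isVCover_insert_of_vertexSplit (hT : IsVCover (vertexSplit H v w₁ w₂ w₃ w₄) T) :
    IsVCover H (insert v (T.toLeft.map (.subtype _))) := by
  refine isVCover_iff_s15.2 fun x y hxy ↦ ?_
  by_cases hx : x = v
  · simp [hx]
  by_cases hy : y = v
  · simp [hy]
  rcases hT.mem_or_mem_of_vertexSplit hxy hx hy with h | h <;> simp [h]

lemma IsVCover.isVCover_of_vertexSplit (hnbrs : H.neighborSet v ⊆ {w₁, w₂, w₃, w₄})
    (hT : IsVCover (vertexSplit H v w₁ w₂ w₃ w₄) T) (h₀ : .inr 0 ∉ T) (h₂ : .inr 2 ∉ T) :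
    IsVCover H (T.toLeft.map (.subtype _)) := by
  have hnbr_mem : ∀ y, H.Adj v y → y ∈ T.toLeft.map (.subtype _) := fun y hvy ↦ by
    have hy : y ≠ v := hvy.ne'
    have hy' : y = w₁ ∨ y = w₂ ∨ y = w₃ ∨ y = w₄ := hnbrs hvy
    have hadj : (vertexSplit H v w₁ w₂ w₃ w₄).Adj (.inl ⟨y, hy⟩) (.inr 0) ∨
        (vertexSplit H v w₁ w₂ w₃ w₄).Adj (.inl ⟨y, hy⟩) (.inr 2) := by
      simp only [vertexSplit_adj_inl_inr]
      tauto
    refine mem_map_toLeft_subtype.2 ⟨hy, ?_⟩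
    rcases hadj with h | h
    exacts [(isVCover_iff_s15.1 hT _ _ h).resolve_right h₀, (isVCover_iff_s15.1 hT _ _ h).resolve_right h₂]
  refine isVCover_iff_s15.2 fun x y hxy ↦ ?_
  by_cases hx : x = v
  · exact .inr (hnbr_mem y (hx ▸ hxy))
  by_cases hy : y = v
  · exact .inl (hnbr_mem x (hy ▸ hxy.symm))
  exact hT.mem_or_mem_of_vertexSplit hxy hx hy

lemma IsVCover.exists_card_add_one_le_of_vertexSplit
    (hnbrs : H.neighborSet v ⊆ {w₁, w₂, w₃, w₄}) (hT : IsVCover (vertexSplit H v w₁ w₂ w₃ w₄) T) :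
    ∃ S : Finset V, IsVCover H S ∧ S.card + 1 ≤ T.card := by
  have hcard := card_toLeft_add_card_toRight (u := T)
  have h₀₁ : 0 ∈ T.toRight ∨ 1 ∈ T.toRight := by
    simpa using isVCover_iff_s15.1 hT (.inr 0) (.inr 1) (by simp)
  have h₁₂ : 1 ∈ T.toRight ∨ 2 ∈ T.toRight := by
    simpa using isVCover_iff_s15.1 hT (.inr 1) (.inr 2) (by simp)
  by_cases hend : 0 ∈ T.toRight ∨ 2 ∈ T.toRight
  · have htwo : 1 < T.toRight.card := by
      rw [one_lt_card]
      rcases hend with h | h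
      · rcases h₁₂ with h' | h' <;> exact ⟨0, h, _, h', by decide⟩
      · rcases h₀₁ with h' | h' <;> exact ⟨2, h, _, h', by decide⟩
    refine ⟨_, hT.isVCover_insert_of_vertexSplit, ?_⟩
    have := card_insert_le v (T.toLeft.map (.subtype _))
    rw [card_map] at this
    omega
  · obtain ⟨h₀, h₂⟩ := not_or.1 hend
    have hone : 0 < T.toRight.card := card_pos.2 ⟨1, h₀₁.resolve_left h₀⟩
    refine ⟨_, hT.isVCover_of_vertexSplit hnbrs (by simpa using h₀) (by simpa using h₂), ?_⟩
    rw [card_map]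
    omega

end vertexSplit

theorem vertexSplit_minVC_general {V : Type*} [Fintype V] [DecidableEq V]
    (H : SimpleGraph V) (v w₁ w₂ w₃ w₄ : V)
    (hnbrs : H.neighborSet v = {w₁, w₂, w₃, w₄}) :
    sInf {m : ℕ | ∃ S : Finset ({x : V // x ≠ v} ⊕ Fin 3),
        IsVCover (vertexSplit H v w₁ w₂ w₃ w₄) S ∧ S.card = m}
      = sInf {m : ℕ | ∃ S : Finset V, IsVCover H S ∧ S.card = m} + 1 := by
  change vertexCoverNumber (vertexSplit H v w₁ w₂ w₃ w₄) = vertexCoverNumber H + 1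
  obtain ⟨S, hS, hS_card⟩ := exists_isVCover_card_eq_vertexCoverNumber H
  obtain ⟨T, hT, hT_card⟩ :=
    exists_isVCover_card_eq_vertexCoverNumber (vertexSplit H v w₁ w₂ w₃ w₄)
  obtain ⟨T', hT', hT'_card⟩ := hS.exists_vertexSplit_card_le hnbrs.ge
  obtain ⟨S', hS', hS'_card⟩ := hT.exists_card_add_one_le_of_vertexSplit hnbrs.le
  have := vertexCoverNumber_le hT'
  have := vertexCoverNumber_le hS'
  omega

/-- if `v` has degree exactly 4 in `H`, with (distinct) neighbors
`w₁, w₂, w₃, w₄`, then the minimum size of a vertex cover of the split graph `G`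
equals the minimum size of a vertex cover of `H` plus 1. -/
theorem vertexSplit_minVC {V : Type*} [Fintype V] [DecidableEq V]
    (H : SimpleGraph V) (v w₁ w₂ w₃ w₄ : V)
    (hdistinct : w₁ ≠ w₂ ∧ w₁ ≠ w₃ ∧ w₁ ≠ w₄ ∧ w₂ ≠ w₃ ∧ w₂ ≠ w₄ ∧ w₃ ≠ w₄)
    (hnbrs : H.neighborSet v = {w₁, w₂, w₃, w₄}) :
    sInf {m : ℕ | ∃ S : Finset ({x : V // x ≠ v} ⊕ Fin 3),
        IsVCover (vertexSplit H v w₁ w₂ w₃ w₄) S ∧ S.card = m}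
      = sInf {m : ℕ | ∃ S : Finset V, IsVCover H S ∧ S.card = m} + 1 :=
  vertexSplit_minVC_general H v w₁ w₂ w₃ w₄ hnbrs
end
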